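/- In the mean-field setting, assume λ > 0 and p_out ≤ τ ≤ p_in. Then the symmetric matrix EL̃ = α^MF·I − EA_τ + λ·P_L is positive definite (in particular invertible), and the spectral norm of its inverse equals ‖EL̃⁻¹‖₂ = 1/(α^MF − t₂⁺), where t₂⁺ := (1/2)·( α^MF − λ + √( (λ + α^MF)² − 4·α^MF·λ·(θ + η) ) ); moreover α^MF − t₂⁺ = ((α^MF + λ)/2)·( 1 − √( 1 − 4·(θ+η)·λ·α^MF/(λ + α^MF)² ) ) > 0. -/

import Mathlib

open Finset Matrix

noncomputable section

/-- The spectral norm (operator 2-norm) of a real square matrix. -/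
def specNorm {n : ℕ} (M : Matrix (Fin n) (Fin n) ℝ) : ℝ :=
  ‖Matrix.toEuclideanCLM (𝕜 := ℝ) M‖

/-- The expected adjacency matrix `EA` of the SSBM. -/
def meanEA (n : ℕ) (pin pout : ℝ) (σ0 : Fin n → ℝ) : Matrix (Fin n) (Fin n) ℝ :=
  Matrix.of fun i j => if σ0 i = σ0 j then pin else pout

/-- The diagonal 0-1 matrix `P_L` with `(P_L)_{ii} = 1` iff `S_i ≠ 0`. -/
def labelProj (n : ℕ) (S : Fin n → ℝ) : Matrix (Fin n) (Fin n) ℝ :=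
  Matrix.diagonal fun i => if S i = 0 then 0 else 1

/-- The mean-field matrix `EL̃ = α^MF·I − EA_τ + λ·P_L`. -/
def meanLtilde (n : ℕ) (pin pout τ lam : ℝ) (σ0 S : Fin n → ℝ) :
    Matrix (Fin n) (Fin n) ℝ :=
  ((n : ℝ) * (pin - pout) / 2) • (1 : Matrix (Fin n) (Fin n) ℝ)
    - Matrix.of (fun i j => meanEA n pin pout σ0 i j - τ)
    + lam • labelProj n S

/-- `t₂⁺ = (1/2)(α^MF − λ + √((λ+α^MF)² − 4α^MF·λ(θ+η)))` with `θ = 2k/n`, `η = 2m/n`. -/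
def tTwoPlus (n k m : ℕ) (pin pout lam : ℝ) : ℝ :=
  (1 / 2) * ((n : ℝ) * (pin - pout) / 2 - lam
    + Real.sqrt ((lam + (n : ℝ) * (pin - pout) / 2) ^ 2
        - 4 * ((n : ℝ) * (pin - pout) / 2) * lam
          * (2 * (k : ℝ) / (n : ℝ) + 2 * (m : ℝ) / (n : ℝ))))

/-!
Write `EL̃ = α I - (c 𝟙𝟙ᵀ + β σσᵀ) + λ P_L` with `β = (p_in - p_out) / 2`, `α = n β` and
`c = (p_in + p_out) / 2 - τ ≤ β`. Since `(𝟙ᵀx)² + (σᵀx)² = 2 ∑_K (∑_{i ∈ K} xᵢ)²` over the two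
clusters `K`, the quadratic form of `EL̃` is at least
`∑_K (α ‖x_K‖² - 2β (∑_K xᵢ)² + λ ‖P_L x_K‖²)`. On each cluster, Cauchy–Schwarz with the weights
`wᵢ = 2β / (α - μ + λ [S i ≠ 0])` bounds this below by `μ ‖x_K‖²` provided the weights of the
cluster sum to one, which happens exactly when `μ` is a root of `X² - (α + λ) X + α λ (θ + η)`;
the smaller root is `μ = α - t₂⁺ > 0`. Equality holds at `v = σ ⊙ w`, and `𝟙ᵀv = 0`, so `v` is
an eigenvector of `EL̃` for `μ`. A coercive operator whose coercivity constant is an eigenvalue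
has inverse of norm exactly `1 / μ`.
-/

open scoped RealInnerProductSpace

section CoerciveOperator

variable {E : Type*} [NormedAddCommGroup E] [InnerProductSpace ℝ E]

theorem mul_norm_le_norm_apply_of_coercive {T : E →L[ℝ] E} {μ : ℝ}
    (hT : ∀ y, μ * ‖y‖ ^ 2 ≤ ⟪y, T y⟫) (y : E) : μ * ‖y‖ ≤ ‖T y‖ := by
  rcases (norm_nonneg y).eq_or_lt with hy | hy
  · rw [← hy, mul_zero]; exact norm_nonneg _
  · refine le_of_mul_le_mul_right ?_ hy
    calc μ * ‖y‖ * ‖y‖ = μ * ‖y‖ ^ 2 := by ring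
      _ ≤ ⟪y, T y⟫ := hT y
      _ ≤ ‖y‖ * ‖T y‖ := real_inner_le_norm y (T y)
      _ = ‖T y‖ * ‖y‖ := mul_comm _ _

theorem norm_inverse_eq_inv_of_coercive {T S : E →L[ℝ] E} (hTS : T * S = 1) (hST : S * T = 1)
    {μ : ℝ} (hμ : 0 < μ) (hT : ∀ y, μ * ‖y‖ ^ 2 ≤ ⟪y, T y⟫)
    {v : E} (hv : v ≠ 0) (hTv : T v = μ • v) : ‖S‖ = μ⁻¹ := by
  refine le_antisymm (S.opNorm_le_bound (inv_nonneg.2 hμ.le) fun x => ?_) ?_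
  · have hx : T (S x) = x := DFunLike.congr_fun hTS x
    have := mul_norm_le_norm_apply_of_coercive hT (S x)
    rw [hx] at this
    rw [inv_mul_eq_div, le_div_iff₀ hμ]
    linarith
  · have hSv : S v = μ⁻¹ • v := by
      have : S (T v) = v := DFunLike.congr_fun hST v
      rwa [hTv, map_smul, ← eq_inv_smul_iff₀ hμ.ne'] at this
    have hle := S.le_opNorm v
    rw [hSv, norm_smul, Real.norm_of_nonneg (inv_nonneg.2 hμ.le)] at hle
    exact le_of_mul_le_mul_right hle (norm_pos_iff.2 hv)

end CoerciveOperator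

theorem specNorm_inv_eq_inv_of_coercive {n : ℕ} {M : Matrix (Fin n) (Fin n) ℝ}
    (hM : IsUnit M.det) {μ : ℝ} (hμ : 0 < μ) (hcoer : ∀ x, μ * (x ⬝ᵥ x) ≤ x ⬝ᵥ M *ᵥ x)
    {v : Fin n → ℝ} (hv : v ≠ 0) (hMv : M *ᵥ v = μ • v) : specNorm M⁻¹ = μ⁻¹ := by
  refine norm_inverse_eq_inv_of_coercive (T := toEuclideanCLM (𝕜 := ℝ) M)
    (by rw [← map_mul, mul_nonsing_inv M hM, map_one])
    (by rw [← map_mul, nonsing_inv_mul M hM, map_one]) hμ (fun y => ?_)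
    (v := WithLp.toLp 2 v) (by simpa using hv) (by rw [toEuclideanCLM_toLp, hMv]; rfl)
  rw [inner_toEuclideanCLM, ← real_inner_self_eq_norm_sq, EuclideanSpace.inner_eq_star_dotProduct]
  simpa [dotProduct_comm] using hcoer y

theorem Matrix.PosDef.of_coercive {ι : Type*} [Fintype ι] {M : Matrix ι ι ℝ} (hM : M.IsHermitian)
    {μ : ℝ} (hμ : 0 < μ) (hcoer : ∀ x, μ * (x ⬝ᵥ x) ≤ x ⬝ᵥ M *ᵥ x) : M.PosDef :=
  .of_dotProduct_mulVec_pos hM fun x hx =>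
    (mul_pos hμ (dotProduct_star_self_pos_iff.2 hx)).trans_le (hcoer (star x))

/-- The smaller root of `X² - (α + λ) X + α λ ρ`; `α^MF - t₂⁺` is this root for `ρ = θ + η`. -/
def smallerRoot (α lam ρ : ℝ) : ℝ :=
  (α + lam - √((lam + α) ^ 2 - 4 * α * lam * ρ)) / 2

section SmallerRoot

variable {α lam ρ : ℝ}

theorem discr_pos_of_lt_one (hα : 0 < α) (hlam : 0 < lam) (hρ : ρ < 1) :
    0 < (lam + α) ^ 2 - 4 * α * lam * ρ := by
  nlinarith [sq_nonneg (lam - α), mul_pos hα hlam]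

theorem smallerRoot_isRoot (hα : 0 < α) (hlam : 0 < lam) (hρ : ρ < 1) :
    smallerRoot α lam ρ ^ 2 - (α + lam) * smallerRoot α lam ρ + α * lam * ρ = 0 := by
  have := Real.sq_sqrt (discr_pos_of_lt_one hα hlam hρ).le
  unfold smallerRoot
  linear_combination this / 4

theorem smallerRoot_pos (hα : 0 < α) (hlam : 0 < lam) (hρ₀ : 0 < ρ) :
    0 < smallerRoot α lam ρ := by
  have : √((lam + α) ^ 2 - 4 * α * lam * ρ) < α + lam := by
    rw [Real.sqrt_lt' (by linarith)]
    nlinarith [mul_pos (mul_pos hα hlam) hρ₀]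
  unfold smallerRoot
  linarith

theorem smallerRoot_le_half_add (α lam ρ : ℝ) : smallerRoot α lam ρ ≤ (α + lam) / 2 := by
  unfold smallerRoot
  linarith [Real.sqrt_nonneg ((lam + α) ^ 2 - 4 * α * lam * ρ)]

/-- `αρ` lies strictly between the roots, since the quadratic takes the value `α²ρ(ρ - 1) < 0`
there. -/
theorem smallerRoot_lt_mul (hα : 0 < α) (hlam : 0 < lam) (hρ₀ : 0 < ρ) (hρ : ρ < 1) :
    smallerRoot α lam ρ < α * ρ := by
  have hroot := smallerRoot_isRoot hα hlam hρ
  have hhalf := smallerRoot_le_half_add α lam ρ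
  by_contra! h
  nlinarith [mul_pos (mul_pos hα hα) (mul_pos hρ₀ (sub_pos.2 hρ))]

theorem smallerRoot_eq_mul_one_sub_sqrt (hα : 0 < α) (hlam : 0 < lam) :
    smallerRoot α lam ρ
      = (α + lam) / 2 * (1 - √(1 - 4 * ρ * lam * α / (lam + α) ^ 2)) := by
  have hpos : 0 < lam + α := by linarith
  have : 1 - 4 * ρ * lam * α / (lam + α) ^ 2
      = ((lam + α) ^ 2 - 4 * α * lam * ρ) / (lam + α) ^ 2 := by
    field_simp
  rw [this, Real.sqrt_div' _ (sq_nonneg _), Real.sqrt_sq hpos.le, smallerRoot]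
  field_simp
  ring

theorem smallerRoot_weights_sum (hα : 0 < α) (hlam : 0 < lam) (hρ₀ : 0 < ρ) (hρ : ρ < 1) :
    α * (1 - ρ) / (α - smallerRoot α lam ρ) + α * ρ / (α - smallerRoot α lam ρ + lam) = 1 := by
  have hroot := smallerRoot_isRoot hα hlam hρ
  have hlt : smallerRoot α lam ρ < α := by
    nlinarith [smallerRoot_lt_mul hα hlam hρ₀ hρ]
  have h₁ : α - smallerRoot α lam ρ ≠ 0 := by linarith
  have h₂ : α - smallerRoot α lam ρ + lam ≠ 0 := by linarith
  field_simp
  linear_combination -hroot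

end SmallerRoot

theorem two_mul_sq_sum_le_of_weights {ι : Type*} {a β μ : ℝ} {d w : ι → ℝ} (hβ : 0 < β)
    (hw : ∀ i, 0 < w i) (hwd : ∀ i, w i * (a - μ + d i) = 2 * β) {s : Finset ι}
    (hs : ∑ i ∈ s, w i = 1) (x : ι → ℝ) :
    2 * β * (∑ i ∈ s, x i) ^ 2 ≤ ∑ i ∈ s, (a - μ + d i) * x i ^ 2 := by
  have hCS := sq_sum_div_le_sum_sq_div s x fun i _ => hw i
  rw [hs, div_one] at hCS
  calc 2 * β * (∑ i ∈ s, x i) ^ 2 ≤ 2 * β * ∑ i ∈ s, x i ^ 2 / w i := by gcongr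
    _ = ∑ i ∈ s, (a - μ + d i) * x i ^ 2 := by
      rw [mul_sum]
      refine sum_congr rfl fun i _ => ?_
      rw [← hwd i]
      field_simp [(hw i).ne']

section SignClusters

variable {ι : Type*} [Fintype ι] {σ : ι → ℝ}

theorem sum_sign_eq_one_add_sum_sign_eq_neg_one (hσ : ∀ i, σ i = 1 ∨ σ i = -1) (f : ι → ℝ) :
    ∑ i with σ i = 1, f i + ∑ i with σ i = -1, f i = ∑ i, f i := by
  rw [← sum_filter_add_sum_filter_not univ (fun i => σ i = 1) f]
  congr 2
  ext i
  rcases hσ i with h | h <;> norm_num [h]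

theorem sum_sign_mul_eq_sub (hσ : ∀ i, σ i = 1 ∨ σ i = -1) (x : ι → ℝ) :
    ∑ i, σ i * x i = ∑ i with σ i = 1, x i - ∑ i with σ i = -1, x i := by
  rw [← sum_sign_eq_one_add_sum_sign_eq_neg_one hσ, sub_eq_add_neg, ← sum_neg_distrib]
  congr 1 <;> refine sum_congr rfl fun i hi => ?_ <;> rw [(mem_filter.1 hi).2] <;> ring

theorem sq_sum_add_sq_sum_sign_mul (hσ : ∀ i, σ i = 1 ∨ σ i = -1) (x : ι → ℝ) :
    (∑ i, x i) ^ 2 + (∑ i, σ i * x i) ^ 2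
      = 2 * ((∑ i with σ i = 1, x i) ^ 2 + (∑ i with σ i = -1, x i) ^ 2) := by
  rw [sum_sign_mul_eq_sub hσ, ← sum_sign_eq_one_add_sum_sign_eq_neg_one hσ]
  ring

end SignClusters

section BlockModel

variable {ι : Type*} [DecidableEq ι] {a c β μ : ℝ} {σ d w : ι → ℝ}

def blockModelMatrix (a c β : ℝ) (σ d : ι → ℝ) : Matrix ι ι ℝ :=
  a • 1 - of (fun i j => c + β * (σ i * σ j)) + diagonal d

theorem blockModelMatrix_isHermitian : (blockModelMatrix a c β σ d).IsHermitian := by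
  ext i j
  rcases eq_or_ne i j with rfl | hij
  · rfl
  · simp [blockModelMatrix, hij, hij.symm, mul_comm]

variable [Fintype ι]

theorem blockModelMatrix_mulVec_apply (x : ι → ℝ) (i : ι) :
    (blockModelMatrix a c β σ d *ᵥ x) i
      = a * x i - c * ∑ j, x j - β * σ i * ∑ j, σ j * x j + d i * x i := by
  have : (of (fun i j => c + β * (σ i * σ j)) *ᵥ x) i
      = c * ∑ j, x j + β * σ i * ∑ j, σ j * x j := by
    simp only [mulVec, dotProduct, of_apply, mul_sum, ← sum_add_distrib]
    exact sum_congr rfl fun j _ => by ring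
  rw [blockModelMatrix, add_mulVec, sub_mulVec, smul_mulVec, one_mulVec, Pi.add_apply,
    Pi.sub_apply, Pi.smul_apply, smul_eq_mul, mulVec_diagonal, this]
  ring

theorem dotProduct_blockModelMatrix_mulVec (x : ι → ℝ) :
    x ⬝ᵥ blockModelMatrix a c β σ d *ᵥ x
      = a * (x ⬝ᵥ x) - c * (∑ i, x i) ^ 2 - β * (∑ i, σ i * x i) ^ 2 + ∑ i, d i * x i ^ 2 := by
  have hterm : ∀ i, x i * (blockModelMatrix a c β σ d *ᵥ x) i
      = a * (x i * x i) - (c * ∑ j, x j) * x i - (β * ∑ j, σ j * x j) * (σ i * x i)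
        + d i * x i ^ 2 := fun i => by
    rw [blockModelMatrix_mulVec_apply]
    ring
  simp only [dotProduct, hterm, sum_add_distrib, sum_sub_distrib, ← mul_sum]
  ring

theorem mul_dotProduct_le_dotProduct_blockModelMatrix_mulVec (hβ : 0 < β) (hc : c ≤ β)
    (hσ : ∀ i, σ i = 1 ∨ σ i = -1) (hw : ∀ i, 0 < w i) (hwd : ∀ i, w i * (a - μ + d i) = 2 * β)
    (h₁ : ∑ i with σ i = 1, w i = 1) (h₂ : ∑ i with σ i = -1, w i = 1) (x : ι → ℝ) :
    μ * (x ⬝ᵥ x) ≤ x ⬝ᵥ blockModelMatrix a c β σ d *ᵥ x := by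
  have hclusters := sq_sum_add_sq_sum_sign_mul hσ x
  have hK₁ := two_mul_sq_sum_le_of_weights hβ hw hwd h₁ x
  have hK₂ := two_mul_sq_sum_le_of_weights hβ hw hwd h₂ x
  have hsplit := sum_sign_eq_one_add_sum_sign_eq_neg_one hσ fun i => (a - μ + d i) * x i ^ 2
  have hc' : c * (∑ i, x i) ^ 2 ≤ β * (∑ i, x i) ^ 2 := by gcongr
  have hxx : x ⬝ᵥ x = ∑ i, x i ^ 2 := by simp only [dotProduct, sq]
  have hexpand : ∑ i, (a - μ + d i) * x i ^ 2 = (a - μ) * (x ⬝ᵥ x) + ∑ i, d i * x i ^ 2 := by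
    rw [hxx, mul_sum, ← sum_add_distrib]
    exact sum_congr rfl fun i _ => by ring
  rw [dotProduct_blockModelMatrix_mulVec]
  nlinarith

theorem blockModelMatrix_mulVec_sign_mul_weights (hσ : ∀ i, σ i = 1 ∨ σ i = -1)
    (hwd : ∀ i, w i * (a - μ + d i) = 2 * β)
    (h₁ : ∑ i with σ i = 1, w i = 1) (h₂ : ∑ i with σ i = -1, w i = 1) :
    blockModelMatrix a c β σ d *ᵥ (fun i => σ i * w i) = μ • fun i => σ i * w i := by
  have hσσ : ∀ i, σ i * σ i = 1 := fun i => by rcases hσ i with h | h <;> rw [h] <;> norm_num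
  have hsum : ∑ i, σ i * w i = 0 := by
    rw [sum_sign_mul_eq_sub hσ, h₁, h₂, sub_self]
  have hsumσ : ∑ i, σ i * (σ i * w i) = 2 := by
    simp only [← mul_assoc, hσσ, one_mul]
    rw [← sum_sign_eq_one_add_sum_sign_eq_neg_one hσ, h₁, h₂]
    norm_num
  ext i
  rw [blockModelMatrix_mulVec_apply, hsum, hsumσ, Pi.smul_apply, smul_eq_mul]
  linear_combination σ i * hwd i

end BlockModel

section Counting

variable {ι : Type*} [Fintype ι]

theorem card_filter_and_ne_zero {S : ι → ℝ} (hS : ∀ i, S i = -1 ∨ S i = 1 ∨ S i = 0)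
    (p : ι → Prop) [DecidablePred p] :
    #{i | p i ∧ S i ≠ 0} = #{i | p i ∧ S i = -1} + #{i | p i ∧ S i = 1} := by
  classical
  rw [← card_union_of_disjoint (disjoint_filter.2 fun i _ h₁ h₂ => by linarith [h₁.2, h₂.2]),
    ← filter_or]
  congr 1
  ext i
  rcases hS i with h | h | h <;> norm_num [h]

theorem sum_filter_ite_eq (p q : ι → Prop) [DecidablePred p] [DecidablePred q] (x y : ℝ) :
    ∑ i with p i, (if q i then x else y) = #{i | p i ∧ q i} * x + #{i | p i ∧ ¬q i} * y := by
  rw [sum_ite, sum_const, sum_const, filter_filter, filter_filter, nsmul_eq_mul, nsmul_eq_mul]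

end Counting

section MeanField

variable {n k m : ℕ} {pin pout τ lam : ℝ} {σ0 S : Fin n → ℝ}

theorem meanLtilde_eq_blockModelMatrix (hσ : ∀ i, σ0 i = 1 ∨ σ0 i = -1) :
    meanLtilde n pin pout τ lam σ0 S
      = blockModelMatrix (n * ((pin - pout) / 2)) ((pin + pout) / 2 - τ) ((pin - pout) / 2) σ0
          fun i => if S i = 0 then 0 else lam := by
  ext i j
  rcases eq_or_ne i j with rfl | hij
  · rcases hσ i with h | h <;> by_cases hS : S i = 0 <;>
      norm_num [meanLtilde, blockModelMatrix, meanEA, labelProj, h, hS] <;> ring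
  · rcases hσ i with hi | hi <;> rcases hσ j with hj | hj <;>
      norm_num [meanLtilde, blockModelMatrix, meanEA, labelProj, hij, hi, hj] <;> ring

theorem labeledFraction_pos (hn : 0 < n) (hkm : 1 ≤ k + m) :
    0 < 2 * (k : ℝ) / n + 2 * (m : ℝ) / n := by
  rw [← add_div]
  exact div_pos (by exact_mod_cast (show 0 < 2 * k + 2 * m by omega)) (by exact_mod_cast hn)

theorem labeledFraction_lt_one (hkm : k + m ≤ n / 2 - 1) :
    2 * (k : ℝ) / n + 2 * (m : ℝ) / n < 1 := by
  rcases Nat.eq_zero_or_pos n with rfl | hn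
  · simp
  rw [← add_div, div_lt_one (by exact_mod_cast hn)]
  exact_mod_cast (show 2 * k + 2 * m < n by omega)

theorem card_sign_eq_neg_one (hev : Even n) (hσ : ∀ i, σ0 i = 1 ∨ σ0 i = -1)
    (hbal : #{i | σ0 i = 1} = n / 2) : #{i | σ0 i = -1} = n / 2 := by
  have h := card_filter_add_card_filter_not (s := univ) fun i => σ0 i = 1
  have hneg : (univ.filter fun i => ¬σ0 i = 1) = univ.filter fun i => σ0 i = -1 :=
    filter_congr fun i _ => by rcases hσ i with h | h <;> norm_num [h]
  rw [hbal, hneg, card_univ, Fintype.card_fin] at h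
  obtain ⟨t, rfl⟩ := hev
  omega

theorem sum_cluster_weights {β : ℝ} (hev : Even n) (hβ : 0 < β) (hlam : 0 < lam)
    (hkm₁ : 1 ≤ k + m) (hkm₂ : k + m ≤ n / 2 - 1) {s : ℝ} (hcard : #{i | σ0 i = s} = n / 2)
    (hlab : #{i | σ0 i = s ∧ S i ≠ 0} = k + m) :
    ∑ i with σ0 i = s, (if S i = 0
        then 2 * β / (n * β - smallerRoot (n * β) lam (2 * k / n + 2 * m / n))
        else 2 * β / (n * β - smallerRoot (n * β) lam (2 * k / n + 2 * m / n) + lam)) = 1 := by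
  have hn : 0 < n := by omega
  have hunl : (#{i | σ0 i = s ∧ S i = 0} : ℝ) = n / 2 - (k + m) := by
    have h := card_filter_add_card_filter_not (s := univ.filter fun i => σ0 i = s) fun i => S i = 0
    rw [filter_filter, filter_filter, hcard] at h
    simp only [← ne_eq, hlab] at h
    have hhalf : ((n / 2 : ℕ) : ℝ) = n / 2 := by
      rw [Nat.cast_div_charZero hev.two_dvd, Nat.cast_ofNat]
    rw [eq_sub_iff_add_eq, ← hhalf, ← h]
    push_cast
    ring
  have h₁ : (n / 2 - (k + m) : ℝ) * (2 * β) = n * β * (1 - (2 * k / n + 2 * m / n)) := by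
    field_simp
  have h₂ : ((k + m : ℕ) : ℝ) * (2 * β) = n * β * (2 * k / n + 2 * m / n) := by
    push_cast
    field_simp
  rw [sum_filter_ite_eq, hunl, hlab,
    ← smallerRoot_weights_sum (mul_pos (Nat.cast_pos.2 hn) hβ) hlam (labeledFraction_pos hn hkm₁)
      (labeledFraction_lt_one hkm₂), ← h₁, ← h₂]
  ring

theorem meanLtilde_coercive_and_eigenvector (hev : Even n) (hp : pout < pin) (hτ : pout ≤ τ)
    (hlam : 0 < lam) (hkm₁ : 1 ≤ k + m) (hkm₂ : k + m ≤ n / 2 - 1)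
    (hσ : ∀ i, σ0 i = 1 ∨ σ0 i = -1) (hbal : #{i | σ0 i = 1} = n / 2)
    (hSval : ∀ i, S i = σ0 i ∨ S i = -σ0 i ∨ S i = 0)
    (hk1 : #{i | σ0 i = 1 ∧ S i = -1} = k) (hk2 : #{i | σ0 i = -1 ∧ S i = 1} = k)
    (hm1 : #{i | σ0 i = 1 ∧ S i = 1} = m) (hm2 : #{i | σ0 i = -1 ∧ S i = -1} = m) {μ : ℝ}
    (hμ : μ = smallerRoot (n * (pin - pout) / 2) lam (2 * k / n + 2 * m / n)) :
    (∀ x, μ * (x ⬝ᵥ x) ≤ x ⬝ᵥ meanLtilde n pin pout τ lam σ0 S *ᵥ x)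
      ∧ ∃ v ≠ 0, meanLtilde n pin pout τ lam σ0 S *ᵥ v = μ • v := by
  rw [mul_div_assoc] at hμ
  set β := (pin - pout) / 2
  subst hμ
  set μ := smallerRoot (n * β) lam (2 * k / n + 2 * m / n)
  have hβ : 0 < β := by simp only [β]; linarith
  have hn : 0 < n := by omega
  have hα : 0 < n * β := mul_pos (by exact_mod_cast hn) hβ
  have hρ₁ := labeledFraction_lt_one hkm₂
  have hμα : μ < n * β := (smallerRoot_lt_mul hα hlam (labeledFraction_pos hn hkm₁) hρ₁).trans_le
    (mul_le_of_le_one_right hα.le hρ₁.le)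
  set w : Fin n → ℝ := fun i => if S i = 0 then 2 * β / (n * β - μ) else 2 * β / (n * β - μ + lam)
  have hw : ∀ i, 0 < w i := fun i => by
    simp only [w]; split_ifs <;> exact div_pos (by positivity) (by linarith)
  have hwd : ∀ i, w i * (n * β - μ + if S i = 0 then 0 else lam) = 2 * β := fun i => by
    simp only [w]
    split_ifs
    · rw [add_zero, div_mul_cancel₀ _ (by linarith)]
    · rw [div_mul_cancel₀ _ (by linarith)]
  have hS : ∀ i, S i = -1 ∨ S i = 1 ∨ S i = 0 := fun i => by
    rcases hSval i with h | h | h <;> rcases hσ i with h' | h' <;> simp [h, h']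
  have h₁ := sum_cluster_weights hev hβ hlam hkm₁ hkm₂ hbal
    (by rw [card_filter_and_ne_zero hS, hk1, hm1])
  have h₂ := sum_cluster_weights hev hβ hlam hkm₁ hkm₂ (card_sign_eq_neg_one hev hσ hbal)
    (by rw [card_filter_and_ne_zero hS, hk2, hm2, add_comm])
  rw [meanLtilde_eq_blockModelMatrix hσ]
  refine ⟨mul_dotProduct_le_dotProduct_blockModelMatrix_mulVec hβ (by linarith) hσ hw hwd h₁ h₂,
    fun i => σ0 i * w i, fun h => ?_, blockModelMatrix_mulVec_sign_mul_weights hσ hwd h₁ h₂⟩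
  have := congrFun h ⟨0, hn⟩
  rcases hσ ⟨0, hn⟩ with h' | h' <;> simp only [h', Pi.zero_apply] at this <;>
    linarith [hw ⟨0, hn⟩]

end MeanField

theorem meanField_inverse_norm_general
    (n : ℕ) (hev : Even n) (pin pout : ℝ)
    (hp : pout < pin)
    (k m : ℕ) (hkm1 : 1 ≤ k + m) (hkm2 : k + m ≤ n / 2 - 1)
    (σ0 S : Fin n → ℝ)
    (hσ : ∀ i, σ0 i = 1 ∨ σ0 i = -1)
    (hbal : (Finset.univ.filter (fun i => σ0 i = 1)).card = n / 2)
    (hSval : ∀ i, S i = σ0 i ∨ S i = -σ0 i ∨ S i = 0)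
    (hk1 : (Finset.univ.filter (fun i => σ0 i = 1 ∧ S i = -1)).card = k)
    (hk2 : (Finset.univ.filter (fun i => σ0 i = -1 ∧ S i = 1)).card = k)
    (hm1 : (Finset.univ.filter (fun i => σ0 i = 1 ∧ S i = 1)).card = m)
    (hm2 : (Finset.univ.filter (fun i => σ0 i = -1 ∧ S i = -1)).card = m)
    (τ lam : ℝ) (hlam : 0 < lam) (hτ1 : pout ≤ τ) :
    (meanLtilde n pin pout τ lam σ0 S).PosDef
    ∧ IsUnit (meanLtilde n pin pout τ lam σ0 S).det
    ∧ specNorm (meanLtilde n pin pout τ lam σ0 S)⁻¹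
        = 1 / ((n : ℝ) * (pin - pout) / 2 - tTwoPlus n k m pin pout lam)
    ∧ (n : ℝ) * (pin - pout) / 2 - tTwoPlus n k m pin pout lam
        = (((n : ℝ) * (pin - pout) / 2 + lam) / 2)
          * (1 - Real.sqrt (1 -
              4 * (2 * (k : ℝ) / (n : ℝ) + 2 * (m : ℝ) / (n : ℝ))
                * lam * ((n : ℝ) * (pin - pout) / 2)
                / (lam + (n : ℝ) * (pin - pout) / 2) ^ 2))
    ∧ 0 < (n : ℝ) * (pin - pout) / 2 - tTwoPlus n k m pin pout lam := by
  have hα : 0 < (n : ℝ) * (pin - pout) / 2 :=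
    div_pos (mul_pos (by exact_mod_cast (show 0 < n by omega)) (by linarith)) two_pos
  have hμ : (n : ℝ) * (pin - pout) / 2 - tTwoPlus n k m pin pout lam
      = smallerRoot ((n : ℝ) * (pin - pout) / 2) lam (2 * k / n + 2 * m / n) := by
    unfold tTwoPlus smallerRoot
    ring
  have hμpos := smallerRoot_pos hα hlam (labeledFraction_pos (show 0 < n by omega) hkm1)
  obtain ⟨hcoer, v, hv, hMv⟩ := meanLtilde_coercive_and_eigenvector (τ := τ) hev hp hτ1 hlam
    hkm1 hkm2 hσ hbal hSval hk1 hk2 hm1 hm2 rfl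
  have hPD : (meanLtilde n pin pout τ lam σ0 S).PosDef := by
    refine Matrix.PosDef.of_coercive ?_ hμpos hcoer
    rw [meanLtilde_eq_blockModelMatrix hσ]
    exact blockModelMatrix_isHermitian
  have hdet := (isUnit_iff_isUnit_det _).1 hPD.isUnit
  rw [hμ, one_div]
  exact ⟨hPD, hdet, specNorm_inv_eq_inv_of_coercive hdet hμpos hcoer hv hMv,
    smallerRoot_eq_mul_one_sub_sqrt hα hlam, hμpos⟩

/-- **Spectral norm of the inverse mean-field matrix (Corollary 3 of the appendix).**
In the mean-field setting with `λ > 0` and `p_out ≤ τ ≤ p_in`, the symmetric matrix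
`EL̃ = α^MF·I − EA_τ + λ·P_L` is positive definite (in particular invertible), and
`‖EL̃⁻¹‖₂ = 1/(α^MF − t₂⁺)`; moreover
`α^MF − t₂⁺ = ((α^MF+λ)/2)(1 − √(1 − 4(θ+η)λα^MF/(λ+α^MF)²)) > 0`. -/
theorem meanField_inverse_norm
    (n : ℕ) (hn : 0 < n) (hev : Even n) (pin pout : ℝ)
    (hpout : 0 < pout) (hp : pout < pin) (hpin : pin < 1)
    (k m : ℕ) (hkm1 : 1 ≤ k + m) (hkm2 : k + m ≤ n / 2 - 1)
    (σ0 S : Fin n → ℝ)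
    (hσ : ∀ i, σ0 i = 1 ∨ σ0 i = -1)
    (hbal : (Finset.univ.filter (fun i => σ0 i = 1)).card = n / 2)
    (hSval : ∀ i, S i = σ0 i ∨ S i = -σ0 i ∨ S i = 0)
    (hk1 : (Finset.univ.filter (fun i => σ0 i = 1 ∧ S i = -1)).card = k)
    (hk2 : (Finset.univ.filter (fun i => σ0 i = -1 ∧ S i = 1)).card = k)
    (hm1 : (Finset.univ.filter (fun i => σ0 i = 1 ∧ S i = 1)).card = m)
    (hm2 : (Finset.univ.filter (fun i => σ0 i = -1 ∧ S i = -1)).card = m)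
    (τ lam : ℝ) (hlam : 0 < lam) (hτ1 : pout ≤ τ) (hτ2 : τ ≤ pin) :
    (meanLtilde n pin pout τ lam σ0 S).PosDef
    ∧ IsUnit (meanLtilde n pin pout τ lam σ0 S).det
    ∧ specNorm (meanLtilde n pin pout τ lam σ0 S)⁻¹
        = 1 / ((n : ℝ) * (pin - pout) / 2 - tTwoPlus n k m pin pout lam)
    ∧ (n : ℝ) * (pin - pout) / 2 - tTwoPlus n k m pin pout lam
        = (((n : ℝ) * (pin - pout) / 2 + lam) / 2)
          * (1 - Real.sqrt (1 -
              4 * (2 * (k : ℝ) / (n : ℝ) + 2 * (m : ℝ) / (n : ℝ))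
                * lam * ((n : ℝ) * (pin - pout) / 2)
                / (lam + (n : ℝ) * (pin - pout) / 2) ^ 2))
    ∧ 0 < (n : ℝ) * (pin - pout) / 2 - tTwoPlus n k m pin pout lam :=
  meanField_inverse_norm_general n hev pin pout hp k m hkm1 hkm2 σ0 S hσ hbal hSval hk1 hk2 hm1 hm2
    τ lam hlam hτ1

end
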